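/- For every ξ ∈ ℝⁿ with |ξ| = 1, the linear map R(ξ) from the complex vector space of symmetric (n+1)×(n+1) complex matrices c = (c_{ab})_{0 ≤ a,b ≤ n} to ℂ^{n+1}, defined by R(ξ)(c)_i = -c_{i0} - √(-1) ξ_j c_{ij} + (1/2)√(-1) ξ_i c_{pp} + (1/2)√(-1) ξ_i c_{00} for 1 ≤ i ≤ n (summing j and p from 1 to n) and R(ξ)(c)_0 = -(1/2) c_{00} + (1/2) c_{pp} - √(-1) ξ_i c_{i0} (summing i and p from 1 to n), is surjective; equivalently, R(ξ) admits a right inverse. -/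

import Mathlib

/-!
Look for a preimage of `v` among the matrices `c` with `c₀₀ = 0`, `c₀ᵢ = cᵢ₀ = wᵢ` and
`cᵢⱼ = t δᵢⱼ`. On these `R(ξ)` becomes
`R(ξ)(c)₀ = (n/2) t - √-1 ξ·w` and `R(ξ)(c)ᵢ = -wᵢ + √-1 ξᵢ (n/2 - 1) t`,
so the spatial components determine `w` in terms of `t`; substituting into the
`0`-th component and using `|ξ| = 1` leaves `(n - 1) t = v₀ - √-1 ξ·v`,
which is solvable because `n ≠ 1`.
-/

noncomputable section

/-- The map `R(ξ)` of the paper: the leading coefficient of the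
Fourier-transformed Bianchi operator. -/
def Rmap (n : ℕ) (ξ : EuclideanSpace ℝ (Fin n))
    (c : Matrix (Fin (n + 1)) (Fin (n + 1)) ℂ) : Fin (n + 1) → ℂ := fun a =>
  Fin.cases
    (-(1 / 2) * c 0 0 + (1 / 2) * (∑ p : Fin n, c p.succ p.succ)
      - Complex.I * ∑ i : Fin n, (ξ i : ℂ) * c i.succ 0)
    (fun i => -(c i.succ 0) - Complex.I * (∑ j : Fin n, (ξ j : ℂ) * c i.succ j.succ)
      + (1 / 2) * Complex.I * (ξ i : ℂ) * (∑ p : Fin n, c p.succ p.succ)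
      + (1 / 2) * Complex.I * (ξ i : ℂ) * c 0 0) a

open Complex Matrix

theorem EuclideanSpace.sum_ofReal_mul_self {ι : Type*} [Fintype ι] (ξ : EuclideanSpace ℝ ι) :
    ∑ i, (ξ i : ℂ) * ξ i = ((‖ξ‖ ^ 2 : ℝ) : ℂ) := by
  rw [EuclideanSpace.norm_sq_eq]
  simp only [Real.norm_eq_abs, sq_abs]
  push_cast
  simp only [sq]

/-- The block matrix `[[a, wᵀ], [w, B]]`, indexed so that `0` is the corner. -/
def borderedMatrix {α : Type*} {n : ℕ} (a : α) (w : Fin n → α)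
    (B : Matrix (Fin n) (Fin n) α) : Matrix (Fin (n + 1)) (Fin (n + 1)) α :=
  Matrix.of (Fin.cons (Fin.cons a w) fun i => Fin.cons (w i) (B i))

theorem borderedMatrix_isSymm {α : Type*} {n : ℕ} (a : α) (w : Fin n → α)
    {B : Matrix (Fin n) (Fin n) α} (hB : B.IsSymm) : (borderedMatrix a w B).IsSymm := by
  ext i j
  refine Fin.cases ?_ (fun i => ?_) i <;> refine Fin.cases ?_ (fun j => ?_) j <;>
    simp [borderedMatrix, hB.apply]

theorem Rmap_borderedMatrix_diagonal (n : ℕ) (ξ : EuclideanSpace ℝ (Fin n)) (w : Fin n → ℂ)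
    (t : ℂ) :
    Rmap n ξ (borderedMatrix 0 w (diagonal fun _ => t)) =
      Fin.cons (n / 2 * t - I * ∑ i, (ξ i : ℂ) * w i)
        fun i => -w i + I * ξ i * ((n / 2 - 1) * t) := by
  funext a
  refine Fin.cases ?_ (fun i => ?_) a <;>
    simp only [Rmap, borderedMatrix, of_apply, Fin.cons_zero, Fin.cons_succ, Fin.cases_zero,
      Fin.cases_succ, diagonal_apply_eq, diagonal_apply, mul_ite, mul_zero, Finset.sum_ite_eq,
      Finset.mem_univ, if_true, Finset.sum_const, Finset.card_univ, Fintype.card_fin,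
      nsmul_eq_mul] <;>
    ring

/-- For each unit vector `ξ ∈ ℝⁿ`, the map `R(ξ)` is
surjective from symmetric matrices onto `ℂ^{n+1}` (equivalently, it admits a
right inverse). -/
theorem statement7 (n : ℕ) (hn : 3 ≤ n) (ξ : EuclideanSpace ℝ (Fin n))
    (hξ : ‖ξ‖ = 1) :
    ∀ v : Fin (n + 1) → ℂ, ∃ c : Matrix (Fin (n + 1)) (Fin (n + 1)) ℂ,
      c.IsSymm ∧ Rmap n ξ c = v := by
  intro v
  have hξξ : ∑ i, (ξ i : ℂ) * ξ i = 1 := by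
    rw [EuclideanSpace.sum_ofReal_mul_self, hξ]; norm_num
  have hn1 : (n : ℂ) - 1 ≠ 0 := sub_ne_zero.mpr (by exact_mod_cast (by omega : n ≠ 1))
  set s := ∑ i, (ξ i : ℂ) * v i.succ
  set t := (v 0 - I * s) / (n - 1)
  set w : Fin n → ℂ := fun i => I * ξ i * ((n / 2 - 1) * t) - v i.succ
  refine ⟨borderedMatrix 0 w (diagonal fun _ => t),
    borderedMatrix_isSymm 0 w (isSymm_diagonal _), ?_⟩
  rw [Rmap_borderedMatrix_diagonal]
  funext a
  refine Fin.cases ?_ (fun i => ?_) a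
  · have hξw :
        ∑ i, (ξ i : ℂ) * w i = (∑ i, (ξ i : ℂ) * ξ i) * (I * ((n / 2 - 1) * t)) - s := by
      simp only [w, s, Finset.sum_mul, ← Finset.sum_sub_distrib]
      exact Finset.sum_congr rfl fun i _ => by ring
    have ht : ((n : ℂ) - 1) * t = v 0 - I * s := mul_div_cancel₀ _ hn1
    rw [Fin.cons_zero, hξw, hξξ]
    linear_combination ht - ((n / 2 - 1) * t) * I_mul_I
  · simp only [Fin.cons_succ, w]
    ring

end
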